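/- arXiv:2508.08413 — 4 statements merged into one kernel-verified Lean document; each statement's English description precedes it below -/
import Mathlib

section
/- If f : ℝ^d → ℝ is twice continuously differentiable and satisfies ‖∇f(y) - ∇f(x)‖ ≤ (L₀ + L₁‖∇f(x)‖)‖y - x‖ for all x, y with ‖y - x‖ ≤ 1/L₁, then for all such x, y: f(y) ≤ f(x) + ⟨∇f(x), y - x⟩ + (L₀ + L₁‖∇f(x)‖)/2 · ‖y - x‖² · e^{L₁‖y-x‖}. -/
/-!
With `C = L₀ + L₁‖∇f(x)‖` and `v = y - x`, the hypothesis bounds `⟪∇f(x + t v) - ∇f(x), v⟫` by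
`C ‖v‖² t` on `[0, 1]`, so `t ↦ f(x + t v) - t ⟪∇f(x), v⟫ - C ‖v‖² t² / 2` has nonpositive
derivative there and is antitone. Comparing its values at `0` and `1` gives the quadratic bound
`f(y) ≤ f(x) + ⟪∇f(x), v⟫ + C ‖v‖² / 2`, which the factor `e^{L₁‖v‖} ≥ 1` only weakens.
-/

open RealInnerProductSpace Set

section

variable {E : Type*} [NormedAddCommGroup E] [InnerProductSpace ℝ E] [CompleteSpace E]
  {f : E → ℝ} {x v : E}

theorem DifferentiableAt.hasDerivAt_comp_add_smul {t : ℝ} (hf : DifferentiableAt ℝ f (x + t • v)) :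
    HasDerivAt (fun s : ℝ => f (x + s • v)) ⟪gradient f (x + t • v), v⟫ t := by
  have hline : HasDerivAt (fun s : ℝ => x + s • v) v t := by
    simpa using ((hasDerivAt_id t).smul_const v).const_add x
  rw [inner_gradient_left]
  exact hf.hasFDerivAt.comp_hasDerivAt t hline

theorem le_add_inner_add_of_inner_gradient_sub_le {C : ℝ}
    (hf : ∀ t ∈ Icc (0 : ℝ) 1, DifferentiableAt ℝ f (x + t • v))
    (hgrad : ∀ t ∈ Ioo (0 : ℝ) 1, ⟪gradient f (x + t • v) - gradient f x, v⟫ ≤ C * t) :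
    f (x + v) ≤ f x + ⟪gradient f x, v⟫ + C / 2 := by
  set φ : ℝ → ℝ := fun t => f (x + t • v) - t * ⟪gradient f x, v⟫ - C / 2 * t ^ 2
  have hφ : ∀ t ∈ Icc (0 : ℝ) 1, HasDerivAt φ
      (⟪gradient f (x + t • v), v⟫ - ⟪gradient f x, v⟫ - C * t) t := by
    intro t ht
    have hlin : HasDerivAt (fun s : ℝ => s * ⟪gradient f x, v⟫) ⟪gradient f x, v⟫ t := by
      simpa using (hasDerivAt_id t).mul_const ⟪gradient f x, v⟫
    have hquad : HasDerivAt (fun s : ℝ => C / 2 * s ^ 2) (C * t) t :=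
      ((hasDerivAt_pow 2 t).const_mul (C / 2)).congr_deriv (by push_cast; ring)
    exact ((hf t ht).hasDerivAt_comp_add_smul.sub hlin).sub hquad
  have hanti : AntitoneOn φ (Icc 0 1) := by
    refine antitoneOn_of_hasDerivWithinAt_nonpos (convex_Icc 0 1)
      (f' := fun t => ⟪gradient f (x + t • v), v⟫ - ⟪gradient f x, v⟫ - C * t)
      (fun t ht => (hφ t ht).continuousAt.continuousWithinAt) (fun t ht => ?_) (fun t ht => ?_)
    · rw [interior_Icc] at ht
      exact (hφ t (Ioo_subset_Icc_self ht)).hasDerivWithinAt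
    · rw [interior_Icc] at ht
      have hgrad_t := hgrad t ht
      rw [inner_sub_left] at hgrad_t
      linarith
  have hφ_le := hanti (left_mem_Icc.2 zero_le_one) (right_mem_Icc.2 zero_le_one) zero_le_one
  norm_num [φ] at hφ_le ⊢
  linarith

theorem inner_gradient_add_smul_sub_le_of_norm_gradient_sub_le {C R t : ℝ} (hv : ‖v‖ ≤ R)
    (hgrowth : ∀ y, ‖y - x‖ ≤ R → ‖gradient f y - gradient f x‖ ≤ C * ‖y - x‖)
    (ht : t ∈ Icc (0 : ℝ) 1) :
    ⟪gradient f (x + t • v) - gradient f x, v⟫ ≤ C * ‖v‖ ^ 2 * t := by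
  have hdist : ‖x + t • v - x‖ = t * ‖v‖ := by
    rw [add_sub_cancel_left, norm_smul, Real.norm_of_nonneg ht.1]
  have hclose : ‖x + t • v - x‖ ≤ R := by
    rw [hdist]
    exact (mul_le_of_le_one_left (norm_nonneg v) ht.2).trans hv
  calc ⟪gradient f (x + t • v) - gradient f x, v⟫
      ≤ ‖gradient f (x + t • v) - gradient f x‖ * ‖v‖ := real_inner_le_norm _ _
    _ ≤ C * (t * ‖v‖) * ‖v‖ := by
      gcongr
      exact hdist ▸ hgrowth _ hclose
    _ = C * ‖v‖ ^ 2 * t := by ring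

end

/-- If f is C² and satisfies the asymmetric (L₀,L₁)-smoothness gradient condition,
    then the corresponding descent-type upper bound with exponential factor holds. -/
theorem stmt_3 (d : ℕ) (L0 L1 : ℝ) (hL0 : 0 < L0) (hL1 : 0 < L1)
    (f : EuclideanSpace ℝ (Fin d) → ℝ) (hf : ContDiff ℝ 2 f)
    (hsmooth : ∀ x y : EuclideanSpace ℝ (Fin d), ‖y - x‖ ≤ 1 / L1 →
      ‖gradient f y - gradient f x‖ ≤ (L0 + L1 * ‖gradient f x‖) * ‖y - x‖) :
    ∀ x y : EuclideanSpace ℝ (Fin d), ‖y - x‖ ≤ 1 / L1 →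
      f y ≤ f x + ⟪gradient f x, y - x⟫ +
        (L0 + L1 * ‖gradient f x‖) / 2 * ‖y - x‖ ^ 2 * Real.exp (L1 * ‖y - x‖) := by
  intro x y hxy
  set v := y - x
  set C := L0 + L1 * ‖gradient f x‖
  have hdiff : Differentiable ℝ f := hf.differentiable two_ne_zero
  have hsegment : ∀ t ∈ Ioo (0 : ℝ) 1,
      ⟪gradient f (x + t • v) - gradient f x, v⟫ ≤ C * ‖v‖ ^ 2 * t := fun t ht =>
    inner_gradient_add_smul_sub_le_of_norm_gradient_sub_le hxy (hsmooth x) (Ioo_subset_Icc_self ht)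
  have hdescent := le_add_inner_add_of_inner_gradient_sub_le (fun t _ => hdiff _) hsegment
  rw [add_sub_cancel x y] at hdescent
  calc f y ≤ f x + ⟪gradient f x, v⟫ + C * ‖v‖ ^ 2 / 2 := hdescent
    _ ≤ f x + ⟪gradient f x, v⟫ + C / 2 * ‖v‖ ^ 2 * Real.exp (L1 * ‖v‖) := by
      rw [mul_div_right_comm]
      gcongr _ + ?_
      exact le_mul_of_one_le_right (by positivity) (Real.one_le_exp (by positivity))
end

section
/- Let f : ℝ^d → ℝ be convex and (L₀,L₁)-smooth with minimizer x* (so ∇f(x*) = 0). Then for any x: ‖∇f(x)‖² ≤ (2L₀ + 3L₁‖∇f(x)‖)(f(x) - f(x*)). -/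
/-!
On the segment from `x` to `x + v`, the Hessian bound gives `‖F'‖ ≤ K ‖F‖ + ε` for
`F t = ∇f (x + t v)`, `K = L₁ ‖v‖`, `ε = L₀ ‖v‖`. When `K < 1`, Grönwall's inequality with
`eˢ - 1 ≤ s / (1 - K)` on `[0, K]` bounds `‖F t - F 0‖` by a quadratic in `t`; integrating it gives a
descent lemma with a cubic remainder. For a well-chosen step `v = -η ∇f x`, one gradient step then
lowers `f` by at least `‖∇f x‖² / (2 L₀ + 3 L₁ ‖∇f x‖)`, and `f x*` lies below the new value.
-/

open Real Set InnerProductSpace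
open scoped RealInnerProductSpace

theorem Real.exp_sub_one_le_div_one_sub {s K : ℝ} (hs : 0 ≤ s) (hsK : s ≤ K) (hK : K < 1) :
    exp s - 1 ≤ s / (1 - K) := by
  have h1s : 0 < 1 - s := by linarith
  calc exp s - 1 ≤ 1 / (1 - s) - 1 := by
        linarith [exp_bound_div_one_sub_of_interval hs (hsK.trans_lt hK)]
    _ = s / (1 - s) := by field_simp; ring
    _ ≤ s / (1 - K) := by gcongr

theorem gronwallBound_le_of_lt_one {δ K ε t : ℝ} (hδ : 0 ≤ δ) (hε : 0 ≤ ε) (hK0 : 0 ≤ K)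
    (hK1 : K < 1) (ht0 : 0 ≤ t) (ht1 : t ≤ 1) :
    gronwallBound δ K ε t ≤ δ + (K * δ + ε) * t / (1 - K) := by
  rcases hK0.eq_or_lt with rfl | hKpos
  · simp [gronwallBound_K0]
  have hexp : exp (K * t) - 1 ≤ K * t / (1 - K) :=
    exp_sub_one_le_div_one_sub (by positivity) (by nlinarith) hK1
  calc gronwallBound δ K ε t = δ + (δ + ε / K) * (exp (K * t) - 1) := by
        rw [gronwallBound_of_K_ne_0 hKpos.ne']; ring
    _ ≤ δ + (δ + ε / K) * (K * t / (1 - K)) := by gcongr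
    _ = δ + (K * δ + ε) * t / (1 - K) := by field_simp

section Gronwall

variable {E : Type*} [NormedAddCommGroup E] [NormedSpace ℝ E] {F F' : ℝ → E} {K ε : ℝ}

theorem norm_le_of_norm_deriv_le_of_lt_one (hF : ContinuousOn F (Icc 0 1))
    (hF' : ∀ t ∈ Ico (0 : ℝ) 1, HasDerivWithinAt F (F' t) (Ici t) t)
    (bound : ∀ t ∈ Ico (0 : ℝ) 1, ‖F' t‖ ≤ K * ‖F t‖ + ε)
    (hε : 0 ≤ ε) (hK0 : 0 ≤ K) (hK1 : K < 1) {t : ℝ} (ht : t ∈ Icc (0 : ℝ) 1) :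
    ‖F t‖ ≤ ‖F 0‖ + (K * ‖F 0‖ + ε) * t / (1 - K) := by
  have := norm_le_gronwallBound_of_norm_deriv_right_le hF hF' le_rfl bound t ht
  rw [sub_zero] at this
  linarith [gronwallBound_le_of_lt_one (norm_nonneg (F 0)) hε hK0 hK1 ht.1 ht.2]

theorem norm_sub_le_of_norm_deriv_le_of_lt_one (hF : ContinuousOn F (Icc 0 1))
    (hF' : ∀ t ∈ Ico (0 : ℝ) 1, HasDerivWithinAt F (F' t) (Ici t) t)
    (bound : ∀ t ∈ Ico (0 : ℝ) 1, ‖F' t‖ ≤ K * ‖F t‖ + ε)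
    (hε : 0 ≤ ε) (hK0 : 0 ≤ K) (hK1 : K < 1) {t : ℝ} (ht : t ∈ Icc (0 : ℝ) 1) :
    ‖F t - F 0‖ ≤ (K * ‖F 0‖ + ε) * (t + K / (1 - K) * t ^ 2 / 2) := by
  set A := K * ‖F 0‖ + ε
  have hB : ∀ s, HasDerivAt (fun s => A * (s + K / (1 - K) * s ^ 2 / 2))
      (A * (1 + K / (1 - K) * s)) s := fun s =>
    (((hasDerivAt_id' s).add (((hasDerivAt_pow 2 s).const_mul (K / (1 - K))).div_const 2)).const_mul
      A).congr_deriv (by ring)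
  refine image_norm_le_of_norm_deriv_right_le_deriv_boundary (hF.sub continuousOn_const)
    (fun s hs => (hF' s hs).sub_const (F 0)) (by simp) hB (fun s hs => ?_) ht
  have h1K : 0 < 1 - K := by linarith
  calc ‖F' s‖ ≤ K * ‖F s‖ + ε := bound s hs
    _ ≤ K * (‖F 0‖ + A * s / (1 - K)) + ε := by
        gcongr
        exact norm_le_of_norm_deriv_le_of_lt_one hF hF' bound hε hK0 hK1 (Ico_subset_Icc_self hs)
    _ = A * (1 + K / (1 - K) * s) := by field_simp; ring

end Gronwall

/-- The step size for `L₀ = a` and `L₁ ‖∇f x‖ = c`; it interpolates the optimal steps `1 / L₀`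
(for `L₁ = 0`) and `1 / (2 L₁ ‖∇f x‖)` (for `L₀ = 0`). -/
noncomputable def stepSize (a c : ℝ) : ℝ := (2 * a + c) / (2 * (a + c) ^ 2)

section StepSize

variable {a c : ℝ}

theorem one_sub_stepSize_mul (ha : 0 < a) (hc : 0 ≤ c) :
    1 - stepSize a c * c = (2 * a ^ 2 + 2 * a * c + c ^ 2) / (2 * (a + c) ^ 2) := by
  have : 0 < a + c := by positivity
  unfold stepSize
  field_simp
  ring

theorem stepSize_mul_lt_one (ha : 0 < a) (hc : 0 ≤ c) : stepSize a c * c < 1 := by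
  rw [← sub_pos, one_sub_stepSize_mul ha hc]
  positivity

theorem one_le_stepSize_gain (ha : 0 < a) (hc : 0 ≤ c) :
    let η := stepSize a c
    1 ≤ (2 * a + 3 * c) * η * (1 - (a + c) * η * (1 / 2 + η * c / (1 - η * c) / 6)) := by
  intro η
  have hr : η * c / (1 - η * c) = (2 * a + c) * c / (2 * a ^ 2 + 2 * a * c + c ^ 2) := by
    rw [one_sub_stepSize_mul ha hc]; simp only [η, stepSize]; field_simp
  have hSη : (a + c) * η = (2 * a + c) / (2 * (a + c)) := by
    simp only [η, stepSize]; field_simp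
  rw [hr, hSη, ← sub_nonneg]
  simp only [η, stepSize]
  field_simp
  ring_nf
  positivity

end StepSize

section Descent

variable {E : Type*} [NormedAddCommGroup E] [InnerProductSpace ℝ E] [CompleteSpace E]

theorem ContDiff.differentiable_gradient {f : E → ℝ} {n : WithTop ℕ∞} (hf : ContDiff ℝ n f)
    (hn : 2 ≤ n) : Differentiable ℝ (gradient f) := by
  have hdf : ContDiff ℝ 1 (fderiv ℝ f) := hf.fderiv_right (m := 1) hn
  exact (toDual ℝ E).symm.differentiable.comp (hdf.differentiable one_ne_zero)

theorem le_add_inner_gradient_add_of_norm_fderiv_gradient_le {f : E → ℝ} {L0 L1 : ℝ}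
    (hL0 : 0 ≤ L0) (hL1 : 0 ≤ L1) (hf : Differentiable ℝ f)
    (hgf : Differentiable ℝ (gradient f))
    (hsmooth : ∀ y, ‖fderiv ℝ (gradient f) y‖ ≤ L0 + L1 * ‖gradient f y‖)
    (x v : E) (hv : L1 * ‖v‖ < 1) :
    f (x + v) ≤ f x + ⟪gradient f x, v⟫ + (L0 + L1 * ‖gradient f x‖) * ‖v‖ ^ 2 *
      (1 / 2 + L1 * ‖v‖ / (1 - L1 * ‖v‖) / 6) := by
  set K := L1 * ‖v‖
  set r := K / (1 - K)
  set A := K * ‖gradient f x‖ + L0 * ‖v‖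
  have hγ : ∀ t : ℝ, HasDerivAt (fun t : ℝ => x + t • v) v t := fun t => by
    simpa using ((hasDerivAt_id t).smul_const v).const_add x
  have hF : ∀ t : ℝ, HasDerivAt (fun t => gradient f (x + t • v))
      (fderiv ℝ (gradient f) (x + t • v) v) t := fun t =>
    (hgf _).hasFDerivAt.comp_hasDerivAt t (hγ t)
  have hφ : ∀ t : ℝ, HasDerivAt (fun t => f (x + t • v)) ⟪gradient f (x + t • v), v⟫ t :=
    fun t => by
      rw [inner_gradient_left]
      exact (hf _).hasFDerivAt.comp_hasDerivAt t (hγ t)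
  have hF_bound : ∀ t : ℝ, ‖fderiv ℝ (gradient f) (x + t • v) v‖ ≤
      K * ‖gradient f (x + t • v)‖ + L0 * ‖v‖ := fun t =>
    calc _ ≤ ‖fderiv ℝ (gradient f) (x + t • v)‖ * ‖v‖ := ContinuousLinearMap.le_opNorm _ _
      _ ≤ (L0 + L1 * ‖gradient f (x + t • v)‖) * ‖v‖ := by gcongr; exact hsmooth _
      _ = K * ‖gradient f (x + t • v)‖ + L0 * ‖v‖ := by ring
  have hgrad_sub : ∀ t ∈ Icc (0 : ℝ) 1,
      ‖gradient f (x + t • v) - gradient f x‖ ≤ A * (t + r * t ^ 2 / 2) := fun t ht => by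
    simpa using norm_sub_le_of_norm_deriv_le_of_lt_one
      (fun t _ => (hF t).continuousAt.continuousWithinAt) (fun t _ => (hF t).hasDerivWithinAt)
      (fun t _ => hF_bound t) (by positivity) (by positivity) hv ht
  have hφ_bound : ∀ t ∈ Ico (0 : ℝ) 1, ⟪gradient f (x + t • v), v⟫ ≤
      ⟪gradient f x, v⟫ + ‖v‖ * A * (t + r * t ^ 2 / 2) := fun t ht => by
    have := real_inner_le_norm (gradient f (x + t • v) - gradient f x) v
    rw [inner_sub_left] at this
    nlinarith [hgrad_sub t (Ico_subset_Icc_self ht), norm_nonneg v]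
  set B : ℝ → ℝ := fun t => f x + ⟪gradient f x, v⟫ * t + ‖v‖ * A * (t ^ 2 / 2 + r * t ^ 3 / 6)
  have hB : ∀ t, HasDerivAt B (⟪gradient f x, v⟫ + ‖v‖ * A * (t + r * t ^ 2 / 2)) t := fun t =>
    ((((hasDerivAt_id' t).const_mul _).const_add _).add ((((hasDerivAt_pow 2 t).div_const 2).add
      (((hasDerivAt_pow 3 t).const_mul r).div_const 6)).const_mul _)).congr_deriv (by ring)
  have hφ_le_B := image_le_of_deriv_right_le_deriv_boundary
    (fun t _ => (hφ t).continuousAt.continuousWithinAt) (fun t _ => (hφ t).hasDerivWithinAt)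
    (by simp [B]) (fun t _ => (hB t).continuousAt.continuousWithinAt)
    (fun t _ => (hB t).hasDerivWithinAt) hφ_bound (right_mem_Icc.mpr zero_le_one)
  simp only [one_smul, B] at hφ_le_B
  linarith

theorem apply_sub_stepSize_smul_gradient_le {f : E → ℝ} {L0 L1 : ℝ} (hL0 : 0 < L0)
    (hL1 : 0 ≤ L1) (hf : Differentiable ℝ f) (hgf : Differentiable ℝ (gradient f))
    (hsmooth : ∀ y, ‖fderiv ℝ (gradient f) y‖ ≤ L0 + L1 * ‖gradient f y‖) (x : E) :
    f (x - stepSize L0 (L1 * ‖gradient f x‖) • gradient f x)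
      ≤ f x - ‖gradient f x‖ ^ 2 / (2 * L0 + 3 * L1 * ‖gradient f x‖) := by
  have hc : 0 ≤ L1 * ‖gradient f x‖ := by positivity
  have hstep := stepSize_mul_lt_one hL0 hc
  have hgain := one_le_stepSize_gain hL0 hc
  set g := gradient f x with hg
  set G := ‖g‖ with hG
  set η := stepSize L0 (L1 * G)
  have hη : 0 ≤ η := by unfold η stepSize; positivity
  have hv : ‖-η • g‖ = η * G := by rw [norm_smul, norm_neg, Real.norm_of_nonneg hη]
  have hinner : ⟪g, -η • g⟫ = -η * G ^ 2 := by rw [inner_smul_right, real_inner_self_eq_norm_sq]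
  have hdescent := le_add_inner_gradient_add_of_norm_fderiv_gradient_le hL0.le hL1 hf hgf hsmooth
    x (-η • g) (by rw [hv]; linarith)
  rw [← hg, ← hG, hv, hinner, show L1 * (η * G) = η * (L1 * G) by ring, neg_smul, ← sub_eq_add_neg]
    at hdescent
  rw [le_sub_comm, div_le_iff₀' (by positivity)]
  calc G ^ 2 ≤ G ^ 2 * ((2 * L0 + 3 * (L1 * G)) * η *
        (1 - (L0 + L1 * G) * η * (1 / 2 + η * (L1 * G) / (1 - η * (L1 * G)) / 6))) :=
        le_mul_of_one_le_right (sq_nonneg G) hgain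
    _ = (2 * L0 + 3 * L1 * G) * (η * G ^ 2 - (L0 + L1 * G) * (η * G) ^ 2 *
        (1 / 2 + η * (L1 * G) / (1 - η * (L1 * G)) / 6)) := by ring
    _ ≤ (2 * L0 + 3 * L1 * G) * (f x - f (x - η • g)) :=
        mul_le_mul_of_nonneg_left (by linarith) (by positivity)

end Descent

theorem stmt_10_general (d : ℕ) (L0 L1 : ℝ) (hL0 : 0 < L0) (hL1 : 0 ≤ L1)
    (f : EuclideanSpace ℝ (Fin d) → ℝ) (hf : ContDiff ℝ 2 f)
    (hsmooth : ∀ x : EuclideanSpace ℝ (Fin d),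
      ‖fderiv ℝ (gradient f) x‖ ≤ L0 + L1 * ‖gradient f x‖)
    (xs : EuclideanSpace ℝ (Fin d)) (hxs : ∀ y, f xs ≤ f y) :
    ∀ x : EuclideanSpace ℝ (Fin d),
      ‖gradient f x‖ ^ 2 ≤ (2 * L0 + 3 * L1 * ‖gradient f x‖) * (f x - f xs) := by
  intro x
  have hstep := apply_sub_stepSize_smul_gradient_le hL0 hL1 (hf.differentiable (by norm_num))
    (hf.differentiable_gradient le_rfl) hsmooth x
  rw [← div_le_iff₀' (by positivity)]
  linarith [(hxs _).trans hstep]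

/-- For convex (L₀,L₁)-smooth f with minimizer x*:
    ‖∇f(x)‖² ≤ (2L₀ + 3L₁‖∇f(x)‖)(f(x) - f(x*)). -/
theorem stmt_10 (d : ℕ) (L0 L1 : ℝ) (hL0 : 0 < L0) (hL1 : 0 ≤ L1)
    (f : EuclideanSpace ℝ (Fin d) → ℝ) (hf : ContDiff ℝ 2 f)
    (hconv : ConvexOn ℝ Set.univ f)
    (hsmooth : ∀ x : EuclideanSpace ℝ (Fin d),
      ‖fderiv ℝ (gradient f) x‖ ≤ L0 + L1 * ‖gradient f x‖)
    (xs : EuclideanSpace ℝ (Fin d)) (hxs : ∀ y, f xs ≤ f y) :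
    ∀ x : EuclideanSpace ℝ (Fin d),
      ‖gradient f x‖ ^ 2 ≤ (2 * L0 + 3 * L1 * ‖gradient f x‖) * (f x - f xs) :=
  stmt_10_general d L0 L1 hL0 hL1 f hf hsmooth xs hxs
end

section
/- Let F : ℝ^d → ℝ be (L₀,L₁)-smooth with L₁ > 0, and let x, x⁺ ∈ ℝ^d satisfy ‖x⁺ - x‖ ≤ min{1/L₁, 1}. Then ‖∇F(x⁺)‖ ≤ 4(L₀/L₁ + ‖∇F(x)‖). -/
open Real Set InnerProductSpace

/-!
Along the unit-speed segment `t ↦ x + t u` from `x` to `x⁺`, the derivative of `∇F` has norm at most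
`L₀ + L₁‖∇F‖`, so Grönwall's inequality gives `‖∇F(x⁺)‖ ≤ (‖∇F(x)‖ + L₀/L₁) e^{L₁‖x⁺ - x‖} - L₀/L₁`.
Since `L₁‖x⁺ - x‖ ≤ 1` and `e < 3`, this is at most `3 (‖∇F(x)‖ + L₀/L₁)`.
-/

theorem ContDiff.differentiable_gradient_s14 {E : Type*} [NormedAddCommGroup E] [InnerProductSpace ℝ E]
    [CompleteSpace E] {F : E → ℝ} {n : WithTop ℕ∞} (hF : ContDiff ℝ n F) (hn : 2 ≤ n) :
    Differentiable ℝ (gradient F) :=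
  (toDual ℝ E).symm.toContinuousLinearEquiv.differentiable.comp
    ((hF.fderiv_right (m := 1) hn).differentiable one_ne_zero)

theorem norm_le_gronwallBound_of_norm_fderiv_le {E G : Type*} [NormedAddCommGroup E]
    [NormedSpace ℝ E] [NormedAddCommGroup G] [NormedSpace ℝ G] {g : E → G} {L0 L1 : ℝ}
    (hg : Differentiable ℝ g) (hbound : ∀ y, ‖fderiv ℝ g y‖ ≤ L0 + L1 * ‖g y‖) (x y : E) :
    ‖g y‖ ≤ gronwallBound ‖g x‖ L1 L0 ‖y - x‖ := by
  set u := ‖y - x‖⁻¹ • (y - x)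
  have hu : ‖u‖ ≤ 1 := by simpa using inv_norm_smul_mem_unitClosedBall (y - x)
  have hend : x + ‖y - x‖ • u = y := by
    rcases eq_or_ne (y - x) 0 with h | h
    · simpa [u, h] using (sub_eq_zero.mp h).symm
    · simp [u, smul_inv_smul₀ (norm_ne_zero_iff.mpr h)]
  have hpath : ∀ t : ℝ, HasDerivAt (fun s : ℝ => g (x + s • u)) (fderiv ℝ g (x + t • u) u) t := by
    intro t
    have hline : HasDerivAt (fun s : ℝ => x + s • u) u t := by
      simpa using ((hasDerivAt_id t).smul_const u).const_add x
    exact (hg _).hasFDerivAt.comp_hasDerivAt t hline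
  have hderiv : ∀ t ∈ Ico (0 : ℝ) ‖y - x‖,
      ‖fderiv ℝ g (x + t • u) u‖ ≤ L1 * ‖g (x + t • u)‖ + L0 := fun t _ =>
    calc ‖fderiv ℝ g (x + t • u) u‖ ≤ ‖fderiv ℝ g (x + t • u)‖ * ‖u‖ := ContinuousLinearMap.le_opNorm _ _
      _ ≤ ‖fderiv ℝ g (x + t • u)‖ := mul_le_of_le_one_right (norm_nonneg _) hu
      _ ≤ L1 * ‖g (x + t • u)‖ + L0 := by linarith [hbound (x + t • u)]
  have := norm_le_gronwallBound_of_norm_deriv_right_le (δ := ‖g x‖)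
    (fun t _ => (hpath t).continuousAt.continuousWithinAt) (fun t _ => (hpath t).hasDerivWithinAt)
    (by simp) hderiv ‖y - x‖ ⟨norm_nonneg _, le_rfl⟩
  rwa [hend, sub_zero] at this

theorem gronwallBound_le_three_mul {δ K ε x : ℝ} (hδ : 0 ≤ δ) (hε : 0 ≤ ε) (hK : 0 < K)
    (hx : K * x ≤ 1) : gronwallBound δ K ε x ≤ 3 * (δ + ε / K) := by
  have hexp : exp (K * x) ≤ 3 :=
    (exp_le_exp.mpr hx).trans (by linarith [exp_one_lt_d9])
  rw [gronwallBound_of_K_ne_0 hK.ne']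
  have hεK : 0 ≤ ε / K := div_nonneg hε hK.le
  nlinarith [mul_le_mul_of_nonneg_left hexp hδ, mul_le_mul_of_nonneg_left hexp hεK]

/-- For (L₀,L₁)-smooth F and ‖x⁺ - x‖ ≤ min{1/L₁, 1}:
    ‖∇F(x⁺)‖ ≤ 4(L₀/L₁ + ‖∇F(x)‖). -/
theorem stmt_14 (d : ℕ) (L0 L1 : ℝ) (hL0 : 0 < L0) (hL1 : 0 < L1)
    (F : EuclideanSpace ℝ (Fin d) → ℝ) (hF : ContDiff ℝ 2 F)
    (hsmooth : ∀ y : EuclideanSpace ℝ (Fin d),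
      ‖fderiv ℝ (gradient F) y‖ ≤ L0 + L1 * ‖gradient F y‖)
    (x xp : EuclideanSpace ℝ (Fin d)) (hstep : ‖xp - x‖ ≤ min (1 / L1) 1) :
    ‖gradient F xp‖ ≤ 4 * (L0 / L1 + ‖gradient F x‖) := by
  have hstep' : L1 * ‖xp - x‖ ≤ 1 := by
    have := (hstep.trans (min_le_left _ _))
    rwa [le_div_iff₀ hL1, mul_comm] at this
  calc ‖gradient F xp‖ ≤ gronwallBound ‖gradient F x‖ L1 L0 ‖xp - x‖ :=
        norm_le_gronwallBound_of_norm_fderiv_le (hF.differentiable_gradient_s14 le_rfl) hsmooth x xp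
    _ ≤ 3 * (‖gradient F x‖ + L0 / L1) :=
        gronwallBound_le_three_mul (norm_nonneg _) hL0.le hL1 hstep'
    _ ≤ 4 * (L0 / L1 + ‖gradient F x‖) := by
        linarith [norm_nonneg (gradient F x), div_pos hL0 hL1]
end

section
/- Let convex f : ℝ^d → ℝ be (L₀,L₁)-smooth and suppose a gradient-type step produces x_{k+1} = x_k - η* ∇f(x_k)/‖∇f(x_k)‖ with η* = (1/L₁) ln(1 + L₁‖∇f(x_k)‖/(L₀ + L₁‖∇f(x_k)‖)). Then the descent satisfies f(x_k) - f(x_{k+1}) ≥ (z/L₁²) ψ*(L₁‖∇f(x_k)‖/z), where z = L₀ + L₁‖∇f(x_k)‖ and ψ*(s) = (1+s)ln(1+s) - s. -/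
open RealInnerProductSpace

/-- Descent for the optimal normalized step: given the (L₀,L₁)-type upper model
    f(y) ≤ f(x) + ⟨∇f(x), y-x⟩ + z·ψ(L₁‖y-x‖)/L₁², the step
    x_{k+1} = x_k - η* ∇f(x_k)/‖∇f(x_k)‖ with
    η* = (1/L₁) ln(1 + L₁‖∇f(x_k)‖/z) achieves
    f(x_k) - f(x_{k+1}) ≥ (z/L₁²) ψ*(L₁‖∇f(x_k)‖/z), z = L₀ + L₁‖∇f(x_k)‖. -/
theorem stmt_18 (d : ℕ) (L0 L1 : ℝ) (hL0 : 0 < L0) (hL1 : 0 < L1)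
    (f : EuclideanSpace ℝ (Fin d) → ℝ) (hf : ContDiff ℝ 2 f)
    (hconv : ConvexOn ℝ Set.univ f)
    (hmodel : ∀ x y : EuclideanSpace ℝ (Fin d),
      f y ≤ f x + ⟪gradient f x, y - x⟫ +
        (L0 + L1 * ‖gradient f x‖) *
          ((Real.exp (L1 * ‖y - x‖) - L1 * ‖y - x‖ - 1) / L1 ^ 2))
    (xk xk1 : EuclideanSpace ℝ (Fin d)) (hg : gradient f xk ≠ 0)
    (hstep : xk1 = xk -
      ((1 / L1) * Real.log (1 + L1 * ‖gradient f xk‖ / (L0 + L1 * ‖gradient f xk‖)) /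
        ‖gradient f xk‖) • gradient f xk) :
    f xk - f xk1 ≥
      ((L0 + L1 * ‖gradient f xk‖) / L1 ^ 2) *
        ((1 + L1 * ‖gradient f xk‖ / (L0 + L1 * ‖gradient f xk‖)) *
            Real.log (1 + L1 * ‖gradient f xk‖ / (L0 + L1 * ‖gradient f xk‖)) -
          L1 * ‖gradient f xk‖ / (L0 + L1 * ‖gradient f xk‖)) := by
  set G := gradient f xk with hG
  set g := ‖G‖ with hgdef
  have hg0 : 0 < g := norm_pos_iff.mpr hg
  set z := L0 + L1 * g with hz
  have hz0 : 0 < z := by positivity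
  set s := L1 * g / z with hs
  have hs0 : 0 < s := by positivity
  have hlog0 : 0 ≤ Real.log (1 + s) := Real.log_nonneg (by linarith)
  set c := (1 / L1) * Real.log (1 + s) / g with hc
  have hc0 : 0 ≤ c := by positivity
  have hdiff : xk1 - xk = (-c) • G := by rw [hstep]; module
  have hinner : ⟪G, xk1 - xk⟫ = -c * g ^ 2 := by
    rw [hdiff, real_inner_smul_right, real_inner_self_eq_norm_sq]
  have hnorm : ‖xk1 - xk‖ = c * g := by
    rw [hdiff, norm_smul, norm_neg, Real.norm_of_nonneg hc0]
  have hcg : L1 * (c * g) = Real.log (1 + s) := by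
    rw [hc]; field_simp
  have hexp : Real.exp (L1 * (c * g)) = 1 + s := by
    rw [hcg, Real.exp_log (by linarith)]
  have hm := hmodel xk xk1
  rw [← hG, hinner, hnorm, hexp, hcg] at hm
  rw [show L0 + L1 * ‖G‖ = z from rfl] at hm
  have hcg2 : c * g ^ 2 = z * s * Real.log (1 + s) / L1 ^ 2 := by
    rw [hc, hs]; field_simp
  have key : z / L1 ^ 2 * ((1 + s) * Real.log (1 + s) - s) =
      z * s * Real.log (1 + s) / L1 ^ 2 - z * ((1 + s - Real.log (1 + s) - 1) / L1 ^ 2) := by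
    field_simp; ring
  rw [ge_iff_le, key]
  nlinarith [hm, hcg2]
end
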